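/- For |q| < 1, the infinite q-Pochhammer symbol has the expansion (x;q)_∞ = ∑_{k=0}^∞ (-1)^k q^{k(k-1)/2} x^k / (q;q)_k (Euler's second identity), valid for all x. -/

import Mathlib

/-!
Let `F(x) = ∑ aₖ xᵏ` be the right-hand side. The coefficients satisfy
`aₖ₊₁ (1 - q^(k+1)) = -qᵏ aₖ`, so `|aₖ₊₁| = εₖ |aₖ|` with `εₖ → 0`, the series converges for
every `x`, and comparing coefficients gives `F(x) = (1 - x) F(qx)`. Iterating,
`F(x) = (x;q)ₙ F(qⁿx)`, and `F(qⁿx) → F(0) = 1` by dominated convergence, while `(x;q)ₙ → (x;q)_∞`.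
-/

/-- The finite q-Pochhammer symbol `(a;q)_k`. -/
def qPoch (a q : ℝ) (k : ℕ) : ℝ := ∏ i ∈ Finset.range k, (1 - a * q ^ i)

/-- The infinite q-Pochhammer symbol `(x;q)_∞ = ∏_{j≥0} (1 - x q^j)`. -/
noncomputable def qPochInf (x q : ℝ) : ℝ := ∏' j : ℕ, (1 - x * q ^ j)

open Filter Topology

theorem summable_norm_mul_pow_of_norm_succ_le {𝕜 : Type*} [NormedField 𝕜] {a : ℕ → 𝕜}
    {ε : ℕ → ℝ} (hε : Tendsto ε atTop (𝓝 0))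
    (ha : ∀ᶠ k in atTop, ‖a (k + 1)‖ ≤ ε k * ‖a k‖) (y : 𝕜) :
    Summable fun k => ‖a k * y ^ k‖ := by
  have hsmall : ∀ᶠ k in atTop, ε k * ‖y‖ < 1 / 2 := by
    refine (hε.mul_const ‖y‖).eventually (gt_mem_nhds ?_)
    norm_num
  refine summable_of_ratio_norm_eventually_le (r := 1 / 2) (by norm_num) ?_
  filter_upwards [ha, hsmall] with k hak hk
  simp only [norm_norm, norm_mul, norm_pow, pow_succ]
  calc ‖a (k + 1)‖ * (‖y‖ ^ k * ‖y‖)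
      ≤ ε k * ‖a k‖ * (‖y‖ ^ k * ‖y‖) := by gcongr
    _ = ε k * ‖y‖ * (‖a k‖ * ‖y‖ ^ k) := by ring
    _ ≤ 1 / 2 * (‖a k‖ * ‖y‖ ^ k) := by gcongr

theorem pow_succ_ne_one_of_abs_lt_one {q : ℝ} (hq : |q| < 1) (k : ℕ) : q ^ (k + 1) ≠ 1 := by
  intro h
  have := congrArg abs h
  rw [abs_pow, abs_one] at this
  exact (pow_lt_one₀ (abs_nonneg q) hq k.succ_ne_zero).ne this

theorem qPoch_succ (a q : ℝ) (k : ℕ) : qPoch a q (k + 1) = qPoch a q k * (1 - a * q ^ k) :=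
  Finset.prod_range_succ _ _

noncomputable def eulerCoeff (q : ℝ) (k : ℕ) : ℝ :=
  (-1) ^ k * q ^ (k * (k - 1) / 2) / qPoch q q k

theorem eulerCoeff_zero (q : ℝ) : eulerCoeff q 0 = 1 := by
  simp [eulerCoeff, qPoch]

theorem eulerCoeff_succ_mul {q : ℝ} {k : ℕ} (hq : q ^ (k + 1) ≠ 1) :
    eulerCoeff q (k + 1) * (1 - q ^ (k + 1)) = -(eulerCoeff q k * q ^ k) := by
  have hne : 1 - q ^ (k + 1) ≠ 0 := sub_ne_zero.2 hq.symm
  have hPoch : qPoch q q (k + 1) = qPoch q q k * (1 - q ^ (k + 1)) := by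
    rw [qPoch_succ, ← pow_succ']
  rw [eulerCoeff, eulerCoeff, hPoch, Nat.triangle_succ, div_mul_eq_mul_div,
    mul_div_mul_right _ _ hne]
  ring

theorem summable_norm_eulerCoeff_mul_pow {q : ℝ} (hq : |q| < 1) (y : ℝ) :
    Summable fun k => ‖eulerCoeff q k * y ^ k‖ := by
  refine summable_norm_mul_pow_of_norm_succ_le (ε := fun k => |q| ^ k / |1 - q ^ (k + 1)|)
    ?_ (Eventually.of_forall fun k => le_of_eq ?_) y
  · have hpow : Tendsto (fun k => q ^ (k + 1)) atTop (𝓝 0) :=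
      (tendsto_add_atTop_iff_nat 1).2 (tendsto_pow_atTop_nhds_zero_of_abs_lt_one hq)
    have := (tendsto_pow_atTop_nhds_zero_of_lt_one (abs_nonneg q) hq).div
      (hpow.const_sub 1).abs (by norm_num : |(1 : ℝ) - 0| ≠ 0)
    rwa [zero_div] at this
  · have hne : |1 - q ^ (k + 1)| ≠ 0 :=
      abs_ne_zero.2 (sub_ne_zero.2 (pow_succ_ne_one_of_abs_lt_one hq k).symm)
    rw [Real.norm_eq_abs, Real.norm_eq_abs, div_mul_eq_mul_div, eq_div_iff hne, ← abs_mul,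
      eulerCoeff_succ_mul (pow_succ_ne_one_of_abs_lt_one hq k), abs_neg, abs_mul, abs_pow, mul_comm]

noncomputable def eulerSeries (q x : ℝ) : ℝ := ∑' k, eulerCoeff q k * x ^ k

theorem summable_eulerCoeff_mul_pow {q : ℝ} (hq : |q| < 1) (y : ℝ) :
    Summable fun k => eulerCoeff q k * y ^ k :=
  (summable_norm_eulerCoeff_mul_pow hq y).of_norm

theorem eulerSeries_eq_one_sub_mul {q : ℝ} (hq : |q| < 1) (x : ℝ) :
    eulerSeries q x = (1 - x) * eulerSeries q (q * x) := by
  have hx := summable_eulerCoeff_mul_pow hq x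
  have hqx := summable_eulerCoeff_mul_pow hq (q * x)
  have hshift : ∀ k,
      eulerCoeff q (k + 1) * x ^ (k + 1) - eulerCoeff q (k + 1) * (q * x) ^ (k + 1)
        = -x * (eulerCoeff q k * (q * x) ^ k) := fun k => by
    linear_combination x ^ (k + 1) * eulerCoeff_succ_mul (pow_succ_ne_one_of_abs_lt_one hq k)
  have hdiff : eulerSeries q x - eulerSeries q (q * x) = -x * eulerSeries q (q * x) := by
    rw [eulerSeries, eulerSeries, ← hx.tsum_sub hqx, (hx.sub hqx).tsum_eq_zero_add]
    simp only [hshift, tsum_mul_left, pow_zero, sub_self, zero_add]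
  linear_combination hdiff

theorem eulerSeries_eq_qPoch_mul {q : ℝ} (hq : |q| < 1) (x : ℝ) (n : ℕ) :
    eulerSeries q x = qPoch x q n * eulerSeries q (q ^ n * x) := by
  induction n with
  | zero => simp [qPoch]
  | succ n ih =>
    rw [ih, eulerSeries_eq_one_sub_mul hq (q ^ n * x), qPoch_succ, ← mul_assoc q, ← pow_succ']
    ring

theorem tendsto_eulerSeries_pow_mul {q : ℝ} (hq : |q| < 1) (x : ℝ) :
    Tendsto (fun n => eulerSeries q (q ^ n * x)) atTop (𝓝 1) := by
  have hterm : ∀ k, Tendsto (fun n => eulerCoeff q k * (q ^ n * x) ^ k) atTop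
      (𝓝 (eulerCoeff q k * (0 * x) ^ k)) := fun k =>
    (((tendsto_pow_atTop_nhds_zero_of_abs_lt_one hq).mul_const x).pow k).const_mul _
  have hbound : ∀ n k, ‖eulerCoeff q k * (q ^ n * x) ^ k‖ ≤ ‖eulerCoeff q k * x ^ k‖ := by
    intro n k
    simp only [norm_mul, norm_pow, Real.norm_eq_abs]
    gcongr
    exact mul_le_of_le_one_left (abs_nonneg x) (pow_le_one₀ (abs_nonneg q) hq.le)
  have hlim := tendsto_tsum_of_dominated_convergence (summable_norm_eulerCoeff_mul_pow hq x)
    hterm (Eventually.of_forall hbound)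
  simpa [eulerSeries, zero_pow_eq, eulerCoeff_zero] using hlim

theorem multipliable_one_sub_mul_pow {q : ℝ} (hq : |q| < 1) (x : ℝ) :
    Multipliable fun j : ℕ => 1 - x * q ^ j := by
  simp_rw [sub_eq_add_neg]
  exact Real.multipliable_one_add_of_summable
    ((summable_geometric_of_abs_lt_one hq).mul_left x).neg

/-- Euler's second identity:
`(x;q)_∞ = ∑_{k≥0} (-1)^k q^{k(k-1)/2} x^k / (q;q)_k` for `|q| < 1` and all `x`. -/
theorem euler_qExp' (q : ℝ) (hq : |q| < 1) (x : ℝ) :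
    qPochInf x q = ∑' k : ℕ, (-1) ^ k * q ^ (k * (k - 1) / 2) * x ^ k / qPoch q q k := by
  have hprod : Tendsto (fun n => qPoch x q n) atTop (𝓝 (qPochInf x q)) :=
    (multipliable_one_sub_mul_pow hq x).hasProd.tendsto_prod_nat
  have hlim : Tendsto (fun n => qPoch x q n * eulerSeries q (q ^ n * x)) atTop
      (𝓝 (qPochInf x q * 1)) :=
    hprod.mul (tendsto_eulerSeries_pow_mul hq x)
  simp_rw [← eulerSeries_eq_qPoch_mul hq x, mul_one] at hlim
  rw [← tendsto_nhds_unique tendsto_const_nhds hlim, eulerSeries]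
  exact tsum_congr fun k => by rw [eulerCoeff]; ring
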